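/- For q ≡ 1 (mod 4) and A, B relatively prime monic polynomials in 𝔽_q[x], the Jacobi symbols satisfy (A/B) = (B/A). -/

import Mathlib

open Polynomial
open scoped Classical

/-- The quadratic residue symbol `(f/P)` for `P` monic irreducible in `𝔽_q[x]`:
the element of `{0, ±1}` with `(f/P) ≡ f^{(|P|-1)/2} (mod P)`. -/
noncomputable def quadResSym (F : Type) [Field F] [Fintype F] (P f : F[X]) : ℤ :=
  if (Ideal.Quotient.mk (Ideal.span {P}) f) ^ ((Fintype.card F ^ P.natDegree - 1) / 2)
      = 1 then 1
  else if (Ideal.Quotient.mk (Ideal.span {P}) f) ^ ((Fintype.card F ^ P.natDegree - 1) / 2)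
      = -1 then -1
  else 0

/-- The Jacobi symbol `(f/Q) = ∏ᵢ (f/Pᵢ)^{αᵢ}` for `Q = ∏ᵢ Pᵢ^{αᵢ}` monic. -/
noncomputable def jacSym (F : Type) [Field F] [Fintype F] (f Q : F[X]) : ℤ :=
  ((UniqueFactorizationMonoid.normalizedFactors Q).map
    (fun P => quadResSym F P f)).prod


section JacobiRecAux

set_option linter.unusedSectionVars false

variable {F : Type} [Field F] [Fintype F]

lemma aeval_pow_card {Ω : Type*} [Field Ω] [Algebra F Ω] (f : F[X]) (x : Ω) :
    (aeval x f) ^ (Fintype.card F) = aeval (x ^ Fintype.card F) f := by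
  obtain ⟨p, hp⟩ := CharP.exists F
  haveI : CharP F p := hp
  haveI hpp : Fact p.Prime := ⟨CharP.char_is_prime F p⟩
  haveI : CharP Ω p := charP_of_injective_algebraMap' F (A := Ω) p
  obtain ⟨n, -, hq⟩ := FiniteField.card F p
  set φ : Ω →+* Ω := iterateFrobenius Ω p n with hφ
  have hφ' : ∀ y : Ω, φ y = y ^ Fintype.card F := by
    intro y; rw [hφ, iterateFrobenius_def, hq]
  have hcomp : φ.comp (algebraMap F Ω) = algebraMap F Ω := by
    ext c
    rw [RingHom.comp_apply, hφ', ← map_pow, FiniteField.pow_card]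
  calc (aeval x f) ^ (Fintype.card F) = φ (eval₂ (algebraMap F Ω) x f) := by
        rw [hφ', aeval_def]
    _ = eval₂ (φ.comp (algebraMap F Ω)) (φ x) f := by rw [hom_eval₂]
    _ = aeval (x ^ Fintype.card F) f := by rw [hcomp, hφ', aeval_def]

lemma aeval_pow_card_pow {Ω : Type*} [Field Ω] [Algebra F Ω] (f : F[X]) (x : Ω) (i : ℕ) :
    (aeval x f) ^ (Fintype.card F ^ i) = aeval (x ^ Fintype.card F ^ i) f := by
  induction i with
  | zero => simp
  | succ i ih => rw [pow_succ, pow_mul, ih, aeval_pow_card, pow_mul]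

lemma pow_card_pow_injective (Ω : Type*) [Field Ω] [Algebra F Ω] (i : ℕ) :
    Function.Injective (fun y : Ω => y ^ (Fintype.card F ^ i)) := by
  obtain ⟨p, hp⟩ := CharP.exists F
  haveI : CharP F p := hp
  haveI hpp : Fact p.Prime := ⟨CharP.char_is_prime F p⟩
  haveI : CharP Ω p := charP_of_injective_algebraMap' F (A := Ω) p
  obtain ⟨n, -, hq⟩ := FiniteField.card F p
  have : ∀ y : Ω, y ^ (Fintype.card F ^ i) = iterateFrobenius Ω p (n * i) y := by
    intro y; rw [iterateFrobenius_def, hq, ← pow_mul]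
  simp only [this]
  exact (iterateFrobenius Ω p (n * i)).injective

lemma root_pow_card_pow_ne {P : F[X]} (hm : P.Monic) (hirr : Irreducible P)
    {k : ℕ} (h0 : 0 < k) (hk : k < P.natDegree) :
    (AdjoinRoot.root P) ^ (Fintype.card F ^ k) ≠ AdjoinRoot.root P := by
  haveI : Fact (Irreducible P) := ⟨hirr⟩
  intro h
  have key : ∀ x : AdjoinRoot P, x ^ (Fintype.card F ^ k) = x := by
    intro x
    obtain ⟨g, rfl⟩ := AdjoinRoot.mk_surjective x
    rw [← AdjoinRoot.aeval_eq, aeval_pow_card_pow, h]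
  let pb := AdjoinRoot.powerBasis hm.ne_zero
  haveI : Module.Finite F (AdjoinRoot P) := Module.Finite.of_basis pb.basis
  haveI : Finite (AdjoinRoot P) := Module.finite_of_finite F
  haveI : Fintype (AdjoinRoot P) := Fintype.ofFinite _
  have hcard : Fintype.card (AdjoinRoot P) = Fintype.card F ^ P.natDegree := by
    rw [Module.card_eq_pow_finrank (K := F), pb.finrank]
    rfl
  have h1 : 1 < Fintype.card F ^ k := Nat.one_lt_pow h0.ne' Fintype.one_lt_card
  have hne : (X ^ (Fintype.card F ^ k) - X : (AdjoinRoot P)[X]) ≠ 0 :=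
    FiniteField.X_pow_card_sub_X_ne_zero _ h1
  have hsub : (Finset.univ.val : Multiset (AdjoinRoot P)) ≤
      (X ^ (Fintype.card F ^ k) - X : (AdjoinRoot P)[X]).roots := by
    rw [Multiset.le_iff_subset Finset.univ.nodup]
    intro x _
    rw [mem_roots hne]
    simp [key x]
  have := Multiset.card_le_card hsub
  rw [Finset.card_val, Finset.card_univ, hcard] at this
  have h2 := (X ^ (Fintype.card F ^ k) - X : (AdjoinRoot P)[X]).card_roots'
  rw [FiniteField.X_pow_card_sub_X_natDegree_eq _ h1] at h2
  have := this.trans h2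
  exact absurd this (not_le.mpr (Nat.pow_lt_pow_right Fintype.one_lt_card hk))

lemma aroots_eq_conj {P : F[X]} (hm : P.Monic) (hirr : Irreducible P)
    {Ω : Type*} [Field Ω] [Algebra F Ω] {θ : Ω} (hθ : aeval θ P = 0) :
    P.aroots Ω = (Multiset.range P.natDegree).map fun i => θ ^ Fintype.card F ^ i := by
  haveI : Fact (Irreducible P) := ⟨hirr⟩
  set q := Fintype.card F
  set m := P.natDegree
  -- the embedding of AdjoinRoot P into Ω sending root to θ
  let ι : AdjoinRoot P →+* Ω := AdjoinRoot.lift (algebraMap F Ω) θ (by rwa [aeval_def] at hθ)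
  have hι : ι (AdjoinRoot.root P) = θ := AdjoinRoot.lift_root _
  -- injectivity of i ↦ θ ^ q ^ i on range m
  have hinj : ∀ i ∈ Multiset.range m, ∀ j ∈ Multiset.range m,
      θ ^ q ^ i = θ ^ q ^ j → i = j := by
    have main : ∀ i j : ℕ, i < j → j < m → θ ^ q ^ i ≠ θ ^ q ^ j := by
      intro i j hij hjm hEq
      have hkey : θ ^ q ^ (j - i) = θ := by
        apply pow_card_pow_injective (F := F) Ω i
        simp only
        rw [← pow_mul, ← pow_add]
        rw [Nat.sub_add_cancel hij.le]
        exact hEq.symm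
      have : (AdjoinRoot.root P) ^ q ^ (j - i) = AdjoinRoot.root P := by
        apply ι.injective
        rw [map_pow, hι, hkey]
      exact root_pow_card_pow_ne hm hirr (Nat.sub_pos_of_lt hij)
        (lt_of_le_of_lt (Nat.sub_le _ _) hjm) this
    intro i hi j hj hEq
    rw [Multiset.mem_range] at hi hj
    rcases lt_trichotomy i j with h | h | h
    · exact absurd hEq (main i j h hj)
    · exact h
    · exact absurd hEq.symm (main j i h hi)
  have hnodup : ((Multiset.range m).map fun i => θ ^ q ^ i).Nodup :=
    Multiset.Nodup.map_on hinj (Multiset.nodup_range m)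
  have hle : ((Multiset.range m).map fun i => θ ^ q ^ i) ≤ P.aroots Ω := by
    rw [Multiset.le_iff_subset hnodup]
    intro x hx
    rw [Multiset.mem_map] at hx
    obtain ⟨i, _, rfl⟩ := hx
    rw [mem_aroots]
    exact ⟨hm.ne_zero, by rw [← aeval_pow_card_pow, hθ, zero_pow (pow_pos Fintype.card_pos i).ne']⟩
  refine (Multiset.eq_of_le_of_card_le hle ?_).symm
  rw [Multiset.card_map, Multiset.card_range]
  calc Multiset.card (P.aroots Ω) ≤ (P.map (algebraMap F Ω)).natDegree := card_roots' _
    _ = m := natDegree_map _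

lemma neg_one_ne_one_of_algebra (hq2 : Fintype.card F % 2 = 1)
    (Ω : Type*) [Field Ω] [Algebra F Ω] : (-1 : Ω) ≠ 1 := by
  obtain ⟨p, hp⟩ := CharP.exists F
  haveI : CharP F p := hp
  haveI hpp : Fact p.Prime := ⟨CharP.char_is_prime F p⟩
  haveI : CharP Ω p := charP_of_injective_algebraMap' F (A := Ω) p
  obtain ⟨n, -, hq⟩ := FiniteField.card F p
  have hp2 : p ≠ 2 := by
    intro h
    have hdvd : p ∣ Fintype.card F := hq ▸ dvd_pow_self p n.2.ne'
    rw [h] at hdvd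
    omega
  have : ringChar Ω ≠ 2 := by
    rw [ringChar.eq Ω p]; exact hp2
  exact Ring.neg_one_ne_one_of_char_ne_two this

lemma quadResSym_spec (hq2 : Fintype.card F % 2 = 1) {P : F[X]} (hm : P.Monic)
    (hirr : Irreducible P) {f : F[X]} (hndvd : ¬ P ∣ f) :
    ((quadResSym F P f : ℤ) : AdjoinRoot P)
        = (AdjoinRoot.mk P f) ^ ((Fintype.card F ^ P.natDegree - 1) / 2)
      ∧ (quadResSym F P f = 1 ∨ quadResSym F P f = -1) := by
  haveI : Fact (Irreducible P) := ⟨hirr⟩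
  set q := Fintype.card F with hqdef
  set m := P.natDegree
  set e := (q ^ m - 1) / 2 with hedef
  set z := AdjoinRoot.mk P f with hzdef
  have hz : z ≠ 0 := fun h0 => hndvd (AdjoinRoot.mk_eq_zero.mp h0)
  let pb := AdjoinRoot.powerBasis hm.ne_zero
  haveI : Module.Finite F (AdjoinRoot P) := Module.Finite.of_basis pb.basis
  haveI : Finite (AdjoinRoot P) := Module.finite_of_finite F
  haveI : Fintype (AdjoinRoot P) := Fintype.ofFinite _
  have hcard : Fintype.card (AdjoinRoot P) = q ^ m := by
    rw [Module.card_eq_pow_finrank (K := F), pb.finrank]; rfl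
  have hodd : q ^ m % 2 = 1 := by
    rw [Nat.pow_mod, hq2, one_pow, Nat.one_mod_eq_one]; omega
  have h1 : 1 ≤ q ^ m := Nat.one_le_pow _ _ Fintype.card_pos
  have h2e : e + e = q ^ m - 1 := by omega
  have hz1 : z ^ (q ^ m - 1) = 1 := by
    have := FiniteField.pow_card_sub_one_eq_one z hz
    rwa [hcard] at this
  have hpm : z ^ e = 1 ∨ z ^ e = -1 := by
    apply mul_self_eq_one_iff.mp
    rw [← pow_add, h2e, hz1]
  have hne : (-1 : AdjoinRoot P) ≠ 1 := neg_one_ne_one_of_algebra hq2 (AdjoinRoot P)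
  have hcond : (Ideal.Quotient.mk (Ideal.span {P}) f) ^ e = z ^ e := rfl
  rcases hpm with h | h
  · rw [quadResSym]
    rw [if_pos (show (Ideal.Quotient.mk (Ideal.span {P}) f) ^ e = 1 from h), h]
    exact ⟨by push_cast; ring, Or.inl rfl⟩
  · rw [quadResSym]
    rw [if_neg (show ¬ (Ideal.Quotient.mk (Ideal.span {P}) f) ^ e = 1 by rw [hcond, h]; exact hne),
      if_pos (show (Ideal.Quotient.mk (Ideal.span {P}) f) ^ e = -1 from h), h]
    exact ⟨by push_cast; ring, Or.inr rfl⟩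

lemma int_pm_cast_inj {E : Type*} [Ring E] (hne : (-1 : E) ≠ 1) {a b : ℤ}
    (ha : a = 1 ∨ a = -1) (hb : b = 1 ∨ b = -1) (h : ((a : ℤ) : E) = b) : a = b := by
  rcases ha with rfl | rfl <;> rcases hb with rfl | rfl
  · rfl
  · exfalso; apply hne; push_cast at h; exact h.symm
  · exfalso; apply hne; push_cast at h; exact h
  · rfl

lemma quadResSym_mul (hq2 : Fintype.card F % 2 = 1) {P : F[X]} (hm : P.Monic)
    (hirr : Irreducible P) {f g : F[X]} (hf : ¬ P ∣ f) (hg : ¬ P ∣ g) :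
    quadResSym F P (f * g) = quadResSym F P f * quadResSym F P g := by
  haveI : Fact (Irreducible P) := ⟨hirr⟩
  have hprime : Prime P := hirr.prime
  have hfg : ¬ P ∣ f * g := by
    intro h
    rcases hprime.2.2 _ _ h with h | h
    exacts [hf h, hg h]
  obtain ⟨hcast, hpm⟩ := quadResSym_spec hq2 hm hirr hfg
  obtain ⟨hcastf, hpmf⟩ := quadResSym_spec hq2 hm hirr hf
  obtain ⟨hcastg, hpmg⟩ := quadResSym_spec hq2 hm hirr hg
  apply int_pm_cast_inj (neg_one_ne_one_of_algebra hq2 (AdjoinRoot P)) hpm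
  · rcases hpmf with h1 | h1 <;> rcases hpmg with h2 | h2 <;> rw [h1, h2] <;> norm_num
  · rw [hcast, map_mul, mul_pow, ← hcastf, ← hcastg]
    push_cast
    ring

lemma not_dvd_multiset_prod {α : Type*} [CommMonoidWithZero α] {P : α} (hprime : Prime P)
    {s : Multiset α} (h : ∀ f ∈ s, ¬ P ∣ f) : ¬ P ∣ s.prod := by
  induction s using Multiset.induction with
  | empty =>
      rw [Multiset.prod_zero]
      exact fun hd => hprime.not_unit (isUnit_of_dvd_one hd)
  | cons a t ih =>
      rw [Multiset.prod_cons]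
      intro hd
      rcases hprime.2.2 _ _ hd with hd1 | hd1
      · exact h a (Multiset.mem_cons_self a t) hd1
      · exact ih (fun f hf => h f (Multiset.mem_cons_of_mem hf)) hd1

lemma quadResSym_multiset_prod (hq2 : Fintype.card F % 2 = 1) {P : F[X]} (hm : P.Monic)
    (hirr : Irreducible P) {s : Multiset F[X]} (h : ∀ f ∈ s, ¬ P ∣ f) :
    quadResSym F P s.prod = (s.map (quadResSym F P)).prod := by
  haveI : Fact (Irreducible P) := ⟨hirr⟩
  induction s using Multiset.induction with
  | empty =>
      simp only [Multiset.prod_zero, Multiset.map_zero]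
      have h1 : ¬ P ∣ 1 := fun hd => hirr.not_isUnit (isUnit_of_dvd_one hd)
      obtain ⟨hcast, hpm⟩ := quadResSym_spec hq2 hm hirr h1
      rw [map_one, one_pow] at hcast
      apply int_pm_cast_inj (neg_one_ne_one_of_algebra hq2 (AdjoinRoot P)) hpm (Or.inl rfl)
      rw [hcast]; norm_num
  | cons a t ih =>
      have ha : ¬ P ∣ a := h a (Multiset.mem_cons_self a t)
      have ht : ∀ f ∈ t, ¬ P ∣ f := fun f hf => h f (Multiset.mem_cons_of_mem hf)
      have htprod : ¬ P ∣ t.prod := not_dvd_multiset_prod hirr.prime ht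
      rw [Multiset.prod_cons, quadResSym_mul hq2 hm hirr ha htprod, Multiset.map_cons,
        Multiset.prod_cons, ih ht]

lemma aeval_eq_prod_aroots {Ω : Type*} [Field Ω] [Algebra F Ω] [IsAlgClosed Ω]
    {B : F[X]} (hmB : B.Monic) (α : Ω) :
    aeval α B = ((B.aroots Ω).map (fun β => α - β)).prod := by
  have hsp : (B.map (algebraMap F Ω)).Splits :=
    IsAlgClosed.splits _
  have hB := hsp.eq_prod_roots
  rw [(hmB.map (algebraMap F Ω)).leadingCoeff, map_one, one_mul] at hB
  rw [aeval_def, ← eval_map, hB, eval_multiset_prod, Multiset.map_map]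
  congr 1
  apply Multiset.map_congr rfl
  intro β _
  simp [aroots]

-- arithmetic helper
lemma e_eq (hq2 : Fintype.card F % 2 = 1) (k : ℕ) :
    (Fintype.card F ^ k - 1) / 2 =
      (∑ i ∈ Finset.range k, Fintype.card F ^ i) * ((Fintype.card F - 1) / 2) := by
  set q := Fintype.card F
  have hq1 : 1 < q := Fintype.one_lt_card
  set s := ∑ i ∈ Finset.range k, q ^ i with hs
  have hgeo : (q - 1) * s = q ^ k - 1 := by
    have hZ : ((s : ℤ)) * ((q : ℤ) - 1) = (q : ℤ) ^ k - 1 := by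
      rw [hs]
      push_cast
      exact geom_sum_mul _ _
    have h1 : 1 ≤ q ^ k := Nat.one_le_pow _ _ (by omega)
    have : ((q - 1) * s : ℕ) = ((q ^ k - 1 : ℕ) : ℤ) := by
      push_cast [h1, hq1.le]
      rw [mul_comm]
      exact hZ
    exact_mod_cast this
  set t := (q - 1) / 2 with ht
  have h2t : q - 1 = 2 * t := by omega
  rw [← hgeo, h2t, mul_assoc, Nat.mul_div_cancel_left _ two_pos, mul_comm]

lemma pow_e_eq {Ω : Type*} [Field Ω] [Algebra F Ω] [IsAlgClosed Ω]
    (hq2 : Fintype.card F % 2 = 1) {A B : F[X]} (hmA : A.Monic) (hirrA : Irreducible A)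
    (hmB : B.Monic) {θ : Ω} (hθ : aeval θ A = 0) :
    (aeval θ B) ^ ((Fintype.card F ^ A.natDegree - 1) / 2)
      = (((A.aroots Ω).map
          (fun α => ((B.aroots Ω).map (fun β => α - β)).prod)).prod) ^ ((Fintype.card F - 1) / 2) := by
  set q := Fintype.card F
  set m := A.natDegree
  rw [e_eq hq2 m, pow_mul]
  congr 1
  rw [← Finset.prod_pow_eq_pow_sum]
  have step1 : ∀ i ∈ Finset.range m, (aeval θ B) ^ q ^ i = aeval (θ ^ q ^ i) B :=
    fun i _ => aeval_pow_card_pow B θ i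
  rw [Finset.prod_congr rfl step1, Finset.prod_eq_multiset_prod, Finset.range_val,
    aroots_eq_conj hmA hirrA hθ, Multiset.map_map]
  congr 1
  apply Multiset.map_congr rfl
  intro i _
  exact aeval_eq_prod_aroots hmB _

lemma quadResSym_swap (hq4 : Fintype.card F % 4 = 1) {P Q : F[X]}
    (hmP : P.Monic) (hirrP : Irreducible P) (hmQ : Q.Monic) (hirrQ : Irreducible Q)
    (hne : P ≠ Q) : quadResSym F P Q = quadResSym F Q P := by
  have hq2 : Fintype.card F % 2 = 1 := by omega
  set q := Fintype.card F
  have hPQ : ¬ P ∣ Q := fun hd =>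
    hne (eq_of_monic_of_associated hmP hmQ (hirrP.associated_of_dvd hirrQ hd))
  have hQP : ¬ Q ∣ P := fun hd =>
    hne (eq_of_monic_of_associated hmP hmQ (hirrQ.associated_of_dvd hirrP hd).symm)
  set Ω := AlgebraicClosure F
  obtain ⟨θ, hθ⟩ := IsAlgClosed.exists_aeval_eq_zero Ω P
    (degree_pos_of_irreducible hirrP).ne'
  obtain ⟨ψ, hψ⟩ := IsAlgClosed.exists_aeval_eq_zero Ω Q
    (degree_pos_of_irreducible hirrQ).ne'
  set m := P.natDegree
  set n := Q.natDegree
  set t := (q - 1) / 2 with hts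
  have heven : Even t := by
    refine Nat.even_iff.mpr ?_
    have hq1 : 1 < q := Fintype.one_lt_card
    omega
  -- transfer the symbols into Ω
  obtain ⟨hcastP, hpmP⟩ := quadResSym_spec hq2 hmP hirrP hPQ
  obtain ⟨hcastQ, hpmQ⟩ := quadResSym_spec hq2 hmQ hirrQ hQP
  let ιP : AdjoinRoot P →+* Ω := AdjoinRoot.lift (algebraMap F Ω) θ (by rwa [aeval_def] at hθ)
  let ιQ : AdjoinRoot Q →+* Ω := AdjoinRoot.lift (algebraMap F Ω) ψ (by rwa [aeval_def] at hψ)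
  have htransP : ((quadResSym F P Q : ℤ) : Ω) = (aeval θ Q) ^ ((q ^ m - 1) / 2) := by
    have := congrArg ιP hcastP
    rwa [map_intCast, map_pow, AdjoinRoot.lift_mk, ← aeval_def] at this
  have htransQ : ((quadResSym F Q P : ℤ) : Ω) = (aeval ψ P) ^ ((q ^ n - 1) / 2) := by
    have := congrArg ιQ hcastQ
    rwa [map_intCast, map_pow, AdjoinRoot.lift_mk, ← aeval_def] at this
  -- the main computation
  have hcardP : Multiset.card (P.aroots Ω) = m := by
    rw [aroots_eq_conj hmP hirrP hθ, Multiset.card_map, Multiset.card_range]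
  have hcardQ : Multiset.card (Q.aroots Ω) = n := by
    rw [aroots_eq_conj hmQ hirrQ hψ, Multiset.card_map, Multiset.card_range]
  have hswap :
      (((Q.aroots Ω).map
        (fun β => ((P.aroots Ω).map (fun α => β - α)).prod)).prod)
      = (-1 : Ω) ^ (m * n) *
        (((P.aroots Ω).map
          (fun α => ((Q.aroots Ω).map (fun β => α - β)).prod)).prod) := by
    have h1 : ∀ β : Ω, ((P.aroots Ω).map (fun α => β - α)).prod
        = (-1 : Ω) ^ m * ((P.aroots Ω).map (fun α => α - β)).prod := by
      intro β
      have : ((P.aroots Ω).map (fun α => β - α))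
          = ((P.aroots Ω).map (fun α => (-1 : Ω) * (α - β))) := by
        apply Multiset.map_congr rfl
        intro α _
        ring
      rw [this, Multiset.prod_map_mul]
      congr 1
      rw [Multiset.map_const', Multiset.prod_replicate, hcardP]
    calc (((Q.aroots Ω).map (fun β => ((P.aroots Ω).map (fun α => β - α)).prod)).prod)
        = (((Q.aroots Ω).map
            (fun β => (-1:Ω)^m * ((P.aroots Ω).map (fun α => α - β)).prod)).prod) := by
          exact congrArg _ (Multiset.map_congr rfl fun β _ => h1 β)
      _ = ((-1:Ω)^m)^n *
            (((Q.aroots Ω).map (fun β => ((P.aroots Ω).map (fun α => α - β)).prod)).prod) := by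
          rw [Multiset.prod_map_mul, Multiset.map_const', Multiset.prod_replicate, hcardQ]
      _ = (-1 : Ω) ^ (m * n) *
            (((P.aroots Ω).map (fun α => ((Q.aroots Ω).map (fun β => α - β)).prod)).prod) := by
          rw [← pow_mul, Multiset.prod_map_prod_map]
  have hmain : (aeval θ Q) ^ ((q ^ m - 1) / 2) = (aeval ψ P) ^ ((q ^ n - 1) / 2) := by
    rw [pow_e_eq hq2 hmP hirrP hmQ hθ, pow_e_eq hq2 hmQ hirrQ hmP hψ, hswap, mul_pow,
      ← pow_mul, ← hts]
    have : Even (m * n * t) := heven.mul_left _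
    rw [this.neg_one_pow, one_mul]
  apply int_pm_cast_inj (E := Ω) (neg_one_ne_one_of_algebra hq2 Ω) hpmP hpmQ
  rw [htransP, htransQ, hmain]

end JacobiRecAux

open UniqueFactorizationMonoid in
/-- For `q ≡ 1 (mod 4)` and `A, B` relatively prime monic
polynomials in `𝔽_q[x]`, the Jacobi symbols satisfy `(A/B) = (B/A)`. -/
theorem jacobi_reciprocity (F : Type) [Field F] [Fintype F]
    (hq : Fintype.card F % 4 = 1) (A B : F[X]) (hA : A.Monic) (hB : B.Monic)
    (hAB : IsCoprime A B) :
    jacSym F A B = jacSym F B A := by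
  have hq2 : Fintype.card F % 2 = 1 := by omega
  set nfA := normalizedFactors A with hnfA
  set nfB := normalizedFactors B with hnfB
  -- basic facts about normalized factors
  have hfacts : ∀ {f : F[X]}, f.Monic → ∀ P ∈ normalizedFactors f,
      P.Monic ∧ Irreducible P ∧ P ∣ f := by
    intro f hf P hP
    have hirr := irreducible_of_normalized_factor P hP
    refine ⟨?_, hirr, dvd_of_mem_normalizedFactors hP⟩
    have := normalize_normalized_factor P hP
    rw [← this]
    exact monic_normalize hirr.ne_zero
  have hprodA : nfA.prod = A := by
    apply eq_of_monic_of_associated ?_ hA (prod_normalizedFactors hA.ne_zero)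
    have : nfA.prod = (nfA.map id).prod := by rw [Multiset.map_id]
    rw [this]
    exact monic_multiset_prod_of_monic _ _ fun P hP => (hfacts hA P hP).1
  have hprodB : nfB.prod = B := by
    apply eq_of_monic_of_associated ?_ hB (prod_normalizedFactors hB.ne_zero)
    have : nfB.prod = (nfB.map id).prod := by rw [Multiset.map_id]
    rw [this]
    exact monic_multiset_prod_of_monic _ _ fun P hP => (hfacts hB P hP).1
  -- coprimality consequences
  have hnd : ∀ P ∈ nfB, ∀ Q ∈ nfA, ¬ P ∣ Q := by
    intro P hP Q hQ hdvd
    obtain ⟨u, v, huv⟩ := hAB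
    have hdA : P ∣ A := hdvd.trans (hfacts hA Q hQ).2.2
    have hdB : P ∣ B := (hfacts hB P hP).2.2
    have : P ∣ 1 := huv ▸ dvd_add (Dvd.dvd.mul_left hdA u) (Dvd.dvd.mul_left hdB v)
    exact (hfacts hB P hP).2.1.not_isUnit (isUnit_of_dvd_one this)
  have hnd' : ∀ Q ∈ nfA, ∀ P ∈ nfB, ¬ Q ∣ P := by
    intro Q hQ P hP hdvd
    obtain ⟨u, v, huv⟩ := hAB
    have hdA : Q ∣ A := (hfacts hA Q hQ).2.2
    have hdB : Q ∣ B := hdvd.trans (hfacts hB P hP).2.2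
    have : Q ∣ 1 := huv ▸ dvd_add (Dvd.dvd.mul_left hdA u) (Dvd.dvd.mul_left hdB v)
    exact (hfacts hA Q hQ).2.1.not_isUnit (isUnit_of_dvd_one this)
  calc jacSym F A B = (nfB.map (fun P => quadResSym F P A)).prod := rfl
    _ = (nfB.map (fun P => (nfA.map (fun Q => quadResSym F P Q)).prod)).prod := by
        congr 1
        apply Multiset.map_congr rfl
        intro P hP
        rw [← hprodA, quadResSym_multiset_prod hq2 (hfacts hB P hP).1 (hfacts hB P hP).2.1
          (fun Q hQ => hnd P hP Q hQ)]
    _ = (nfA.map (fun Q => (nfB.map (fun P => quadResSym F P Q)).prod)).prod :=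
        Multiset.prod_map_prod_map _ _
    _ = (nfA.map (fun Q => (nfB.map (fun P => quadResSym F Q P)).prod)).prod := by
        congr 1
        apply Multiset.map_congr rfl
        intro Q hQ
        congr 1
        apply Multiset.map_congr rfl
        intro P hP
        refine quadResSym_swap hq (hfacts hB P hP).1 (hfacts hB P hP).2.1
          (hfacts hA Q hQ).1 (hfacts hA Q hQ).2.1 ?_
        intro hPQ
        exact hnd P hP Q hQ (hPQ ▸ dvd_refl P)
    _ = (nfA.map (fun Q => quadResSym F Q B)).prod := by
        congr 1
        apply Multiset.map_congr rfl
        intro Q hQ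
        rw [← hprodB, quadResSym_multiset_prod hq2 (hfacts hA Q hQ).1 (hfacts hA Q hQ).2.1
          (fun P hP => hnd' Q hQ P hP)]
    _ = jacSym F B A := rfl
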